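/- arXiv:2011.12777 — 2 statements merged into one kernel-verified Lean document; each statement's English description precedes it below -/
import Mathlib

section
/- With T = L + M, R = K + M as above, where L is the fraction field of K and both K and T have finite Krull dimension, R has finite Krull dimension equal to max{ht_T(M) + dim K, dim T}. -/
section Setup

variable {T : Type*} [CommRing T] [IsDomain T]

/-- The subring `K + M` of `T`, for a subring `K` and an ideal `M` of `T`. -/
def ringR (K : Subring T) (M : Ideal T) : Subring T where
  carrier := {t | ∃ k ∈ K, ∃ m ∈ M, t = k + m}
  one_mem' := ⟨1, K.one_mem, 0, M.zero_mem, by ring⟩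
  zero_mem' := ⟨0, K.zero_mem, 0, M.zero_mem, by ring⟩
  add_mem' := by
    rintro a b ⟨k1, hk1, m1, hm1, rfl⟩ ⟨k2, hk2, m2, hm2, rfl⟩
    exact ⟨k1 + k2, K.add_mem hk1 hk2, m1 + m2, M.add_mem hm1 hm2, by ring⟩
  neg_mem' := by
    rintro a ⟨k, hk, m, hm, rfl⟩
    exact ⟨-k, K.neg_mem hk, -m, M.neg_mem hm, by ring⟩
  mul_mem' := by
    rintro a b ⟨k1, hk1, m1, hm1, rfl⟩ ⟨k2, hk2, m2, hm2, rfl⟩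
    refine ⟨k1 * k2, K.mul_mem hk1 hk2, k1 * m2 + m1 * k2 + m1 * m2, ?_, by ring⟩
    exact M.add_mem (M.add_mem (M.mul_mem_left _ hm2) (M.mul_mem_right _ hm1))
      (M.mul_mem_left _ hm2)

theorem K_le_ringR (K : Subring T) (M : Ideal T) : K ≤ ringR K M :=
  fun k hk => ⟨k, hk, 0, M.zero_mem, (add_zero k).symm⟩

/-- An ideal `A` of `T`, viewed as a module over a subring `S` of `T`. -/
def idealAsMod (S : Subring T) (A : Ideal T) : Submodule ↥S T where
  carrier := A
  add_mem' := fun ha hb => A.add_mem ha hb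
  zero_mem' := A.zero_mem
  smul_mem' := fun r a ha => A.mul_mem_left (r : T) ha

/-- The subring `L` of `T` is a field. -/
def IsFieldSub (L : Subring T) : Prop := ∀ x ∈ L, x ≠ 0 → ∃ y ∈ L, x * y = 1

/-- `T = L ⊕ M` as additive groups: `L` is a retract of `T` with maximal ideal `M`. -/
def DirectSumDecomp (L : Subring T) (M : Ideal T) : Prop :=
  (∀ t : T, ∃ l ∈ L, ∃ m ∈ M, t = l + m) ∧ ∀ x ∈ L, x ∈ M → x = 0

/-- `L` is the field of fractions of `K` (inside `T`). -/
def IsFracOf (K L : Subring T) : Prop :=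
  ∀ l ∈ L, ∃ a ∈ K, ∃ b ∈ K, b ≠ 0 ∧ l * b = a

/-- The module structure on a subring over a smaller subring. -/
noncomputable def modOfLE {K L : Subring T} (h : K ≤ L) : Module ↥K ↥L :=
  ((Subring.inclusion h).toAlgebra).toModule

/-- `T` localized at the prime `M` is a valuation domain. -/
def ValAtPrime (M : Ideal T) (hp : M.IsPrime) : Prop :=
  @ValuationRing (@Localization.AtPrime T _ M hp) _
    (@IsLocalization.isDomain_of_local_atPrime T _ _ M hp)

/-- A Prüfer domain: every nonzero finitely generated ideal is invertible. -/
def IsPruferDomain (A : Type*) [CommRing A] [IsDomain A] : Prop :=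
  ∀ I : Ideal A, I ≠ ⊥ → I.FG →
    IsUnit (I : FractionalIdeal (nonZeroDivisors A) (FractionRing A))

/-- A GCD domain: any two nonzero elements admit a greatest common divisor. -/
def IsGCDDomain (A : Type*) [CommRing A] [IsDomain A] : Prop :=
  ∀ a b : A, a ≠ 0 → b ≠ 0 →
    ∃ g : A, g ∣ a ∧ g ∣ b ∧ ∀ c : A, c ∣ a → c ∣ b → c ∣ g

/-- The algebra structure of the fraction field of `T` over a subring of `T`. -/
noncomputable def algFrac (S : Subring T) : Algebra ↥S (FractionRing T) :=
  ((algebraMap T (FractionRing T)).comp S.subtype).toAlgebra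

end Setup

/-!
Let `𝔪 = M ∩ R`. Since `R/𝔪 ≅ K`, the coheight of `𝔪` in `Spec R` is `dim K`. A prime `P ⊉ 𝔪`
of `R` is the contraction of the prime `(P :_T M)` of `T`, and `P ↦ (P :_T M)` is strictly
monotone, so `ht P ≤ dim T`; for `P ⊊ 𝔪`, clearing the denominators of `L = Frac K` shows
`(P :_T M) ⊊ M`, whence `ht 𝔪 = ht_T M`. Every prime below a prime `Q ⊇ 𝔪` is comparable with `𝔪`
(if `x = k + m ∈ P ∖ M` then `k⁻¹x ∈ P` is a unit modulo `M`), so `ht Q ≤ ht 𝔪 + coheight 𝔪`.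
Conversely contraction embeds `Spec T` into `Spec R`, and `ht 𝔪 + coheight 𝔪 ≤ dim R`.
-/

namespace Order

variable {α : Type*} [PartialOrder α]

lemma height_le_height_add_coheight_of_forall_le {a b : α} (h : ∀ x ≤ b, x ≤ a ∨ a ≤ x) :
    height b ≤ height a + coheight a := by
  refine height_le fun p hp => ?_
  have hle : ∀ i, p i ≤ a ∨ a ≤ p i := fun i => h _ (hp ▸ p.monotone (Fin.le_last i))
  by_cases hex : ∃ i, a ≤ p i
  · obtain ⟨j, hj, hmin⟩ := WellFounded.has_min wellFounded_lt {i | a ≤ p i} hex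
    have hj_le : ((j : ℕ) : ℕ∞) ≤ height a := by
      rcases Nat.eq_zero_or_pos (j : ℕ) with h0 | hpos
      · simp [h0]
      · let i : Fin (p.length + 1) := ⟨j - 1, by omega⟩
        have hij : i < j := by rw [Fin.lt_def]; simp only [i]; omega
        have hi : p i < a :=
          ((hle i).resolve_right (hmin i · hij)).lt_of_ne fun e => hmin i e.ge hij
        calc ((j : ℕ) : ℕ∞) = (i : ℕ) + 1 := by simp only [i]; norm_cast; omega
          _ ≤ height (p i) + 1 := by gcongr; exact index_le_height p i
          _ ≤ height a := height_add_one_le hi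
    have hrev : ((j.rev : ℕ) : ℕ∞) ≤ coheight a :=
      (rev_index_le_coheight p j).trans (coheight_anti hj)
    calc (p.length : ℕ∞) = (j : ℕ) + (j.rev : ℕ) := by rw [Fin.val_rev]; norm_cast; omega
      _ ≤ height a + coheight a := add_le_add hj_le hrev
  · push Not at hex
    exact (length_le_height ((hle _).resolve_right (hex _))).trans le_self_add

end Order

section RingR

open Order hiding Ideal

variable {T : Type*} [CommRing T] {L K : Subring T} {M : Ideal T}

lemma mem_ringR_of_mem {m : T} (hm : m ∈ M) : m ∈ ringR K M :=
  ⟨0, K.zero_mem, m, hm, (zero_add m).symm⟩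

variable (K M) in
/-- `𝔪 = M ∩ R`. -/
def ringRIdeal : Ideal (ringR K M) := M.comap (ringR K M).subtype

lemma mem_ringRIdeal {x : ringR K M} : x ∈ ringRIdeal K M ↔ (x : T) ∈ M := Iff.rfl

instance [M.IsPrime] : (ringRIdeal K M).IsPrime := Ideal.comap_isPrime _ _

variable (K M) in
def ringRPrime [M.IsPrime] : PrimeSpectrum (ringR K M) := ⟨ringRIdeal K M, inferInstance⟩

variable (K M) in
noncomputable def quotientRingRIdealEquiv [IsDomain T] (hKM : ∀ x ∈ K, x ∈ M → x = 0) :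
    K ≃+* ringR K M ⧸ ringRIdeal K M :=
  RingEquiv.ofBijective ((Ideal.Quotient.mk _).comp (Subring.inclusion (K_le_ringR K M))) <| by
    refine ⟨(injective_iff_map_eq_zero _).mpr fun k hk => ?_, fun y => ?_⟩
    · exact Subtype.ext
        (hKM k k.2 ((Ideal.Quotient.eq_zero_iff_mem (I := ringRIdeal K M)).mp hk))
    · obtain ⟨⟨x, k, hk, m, hm, rfl⟩, rfl⟩ := Ideal.Quotient.mk_surjective y
      refine ⟨⟨k, hk⟩, Ideal.Quotient.eq.mpr ?_⟩
      simpa [mem_ringRIdeal] using M.neg_mem hm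

lemma coheight_ringRPrime [IsDomain T] [M.IsPrime] (hKM : ∀ x ∈ K, x ∈ M → x = 0) :
    (coheight (ringRPrime K M) : WithBot ℕ∞) = ringKrullDim K := by
  rw [coheight_eq_krullDim_Ici, ringKrullDim_eq_of_ringEquiv (quotientRingRIdealEquiv K M hKM),
    ringKrullDim_quotient]
  rfl

lemma strictMono_comap_subtype_ringR (hM : M.IsMaximal) :
    StrictMono (PrimeSpectrum.comap (ringR K M).subtype) := by
  intro Q₁ Q₂ hlt
  rw [← PrimeSpectrum.asIdeal_lt_asIdeal] at hlt ⊢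
  refine (Ideal.comap_mono hlt.le).lt_of_ne fun heq => ?_
  have hMQ₁ : ¬ M ≤ Q₁.asIdeal := fun hle =>
    Q₂.2.ne_top (((hM.eq_of_le Q₁.2.ne_top hle) ▸ hM : Q₁.asIdeal.IsMaximal).out.2 _ hlt)
  obtain ⟨m, hmM, hmQ₁⟩ := SetLike.not_le_iff_exists.mp hMQ₁
  obtain ⟨t, htQ₂, htQ₁⟩ := SetLike.exists_of_lt hlt
  have htm : (⟨t * m, mem_ringR_of_mem (M.mul_mem_left t hmM)⟩ : ringR K M) ∈
      Q₂.asIdeal.comap (ringR K M).subtype := Q₂.asIdeal.mul_mem_right m htQ₂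
  rw [← heq] at htm
  exact (Q₁.2.mem_or_mem htm).elim htQ₁ hmQ₁

variable (K M) in
/-- `(P :_T M) = {t ∈ T | tM ⊆ P}`. -/
def colonIdeal (P : Ideal (ringR K M)) : Ideal T where
  carrier := {t | ∀ m (hm : m ∈ M), ⟨t * m, mem_ringR_of_mem (M.mul_mem_left t hm)⟩ ∈ P}
  zero_mem' m _ := by
    convert P.zero_mem using 1
    exact Subtype.ext (zero_mul m)
  add_mem' {a b} ha hb m hm := by
    convert P.add_mem (ha m hm) (hb m hm) using 1
    exact Subtype.ext (add_mul a b m)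
  smul_mem' c t ht m hm := by
    convert ht (c * m) (M.mul_mem_left c hm) using 1
    exact Subtype.ext (by simp only [smul_eq_mul]; ring)

lemma mem_colonIdeal {P : Ideal (ringR K M)} {t : T} :
    t ∈ colonIdeal K M P ↔
      ∀ m (hm : m ∈ M), ⟨t * m, mem_ringR_of_mem (M.mul_mem_left t hm)⟩ ∈ P :=
  Iff.rfl

lemma colonIdeal_mono : Monotone (colonIdeal K M) := fun _ _ h _ ht m hm => h (ht m hm)

lemma comap_colonIdeal {P : Ideal (ringR K M)} (hP : P.IsPrime) (hMP : ¬ ringRIdeal K M ≤ P) :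
    (colonIdeal K M P).comap (ringR K M).subtype = P := by
  obtain ⟨m, hmM, hmP⟩ := SetLike.not_le_iff_exists.mp hMP
  ext x
  refine ⟨fun hx => ?_, fun hx n hn => ?_⟩
  · have hxm : x * m ∈ P := hx m hmM
    exact (hP.mem_or_mem hxm).resolve_right hmP
  · exact P.mul_mem_right ⟨n, mem_ringR_of_mem hn⟩ hx

lemma colonIdeal_isPrime {P : Ideal (ringR K M)} (hP : P.IsPrime) (hMP : ¬ ringRIdeal K M ≤ P) :
    (colonIdeal K M P).IsPrime := by
  refine ⟨fun htop => hP.ne_top ?_, fun {a b} hab => or_iff_not_imp_left.mpr fun ha m hm => ?_⟩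
  · rw [← comap_colonIdeal hP hMP, htop, Ideal.comap_top]
  · obtain ⟨n, hn, hanP⟩ := not_forall₂.mp (mem_colonIdeal.not.mp ha)
    have hprod := hab (n * m) (M.mul_mem_left n hm)
    refine (hP.mem_or_mem (?_ : _ * _ ∈ P)).resolve_left hanP
    convert hprod using 1
    exact Subtype.ext (show a * n * (b * m) = a * b * (n * m) by ring)

lemma colonIdeal_le_of_lt_ringRIdeal [IsDomain T] (hLM : DirectSumDecomp L M) (hKL : K ≤ L)
    (hfrac : IsFracOf K L) {P : Ideal (ringR K M)} (hP : P.IsPrime) (hPM : P < ringRIdeal K M) :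
    colonIdeal K M P ≤ M := by
  intro t ht
  obtain ⟨l, hl, m, hm, rfl⟩ := hLM.1 t
  obtain ⟨a, ha, b, hb, hb0, hlb⟩ := hfrac l hl
  have hR : (l + m) * b ∈ ringR K M :=
    ⟨a, ha, m * b, M.mul_mem_right b hm, by rw [add_mul, hlb]⟩
  have hP' : (⟨(l + m) * b, hR⟩ : ringR K M) ∈ P := by
    rw [← comap_colonIdeal hP (not_le_of_gt hPM)]
    exact (colonIdeal K M P).mul_mem_right b ht
  have haM : a ∈ M := by
    have hbM : (l + m) * b - m * b ∈ M := M.sub_mem (hPM.le hP') (M.mul_mem_right b hm)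
    rwa [add_mul, hlb, add_sub_cancel_right] at hbM
  have hl0 : l = 0 := by
    have hab := hLM.2 a (hKL ha) haM
    rw [← hlb] at hab
    exact (mul_eq_zero.mp hab).resolve_right hb0
  simpa [hl0] using hm

lemma le_ringRIdeal_or_ringRIdeal_le (hL : IsFieldSub L) (hKL : K ≤ L)
    {P C : Ideal (ringR K M)} (hP : P.IsPrime) (hC : C ≠ ⊤) (hPC : P ≤ C)
    (hMC : ringRIdeal K M ≤ C) : P ≤ ringRIdeal K M ∨ ringRIdeal K M ≤ P := by
  refine or_iff_not_imp_right.mpr fun hMP x hxP => by_contra fun hxM => hC ?_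
  obtain ⟨n, hnM, hnP⟩ := SetLike.not_le_iff_exists.mp hMP
  obtain ⟨k, hk, m, hm, hx⟩ := x.2
  have hk0 : k ≠ 0 := by rintro rfl; exact hxM (by simpa [mem_ringRIdeal, hx] using hm)
  obtain ⟨k', -, hkk'⟩ := hL k (hKL hk) hk0
  have hu : k' * x = 1 + k' * m := by rw [hx, mul_add, mul_comm k' k, hkk']
  set u : ringR K M := ⟨k' * x, hu ▸ ⟨1, K.one_mem, k' * m, M.mul_mem_left k' hm, rfl⟩⟩
  have huP : u ∈ P := by
    have hnu : n * u ∈ P := by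
      convert P.mul_mem_right ⟨k' * n, mem_ringR_of_mem (M.mul_mem_left k' hnM)⟩ hxP using 1
      exact Subtype.ext (show (n : T) * (k' * x) = x * (k' * n) by ring)
    exact (hP.mem_or_mem hnu).resolve_left hnP
  have hu1 : u - 1 ∈ ringRIdeal K M := by
    rw [mem_ringRIdeal]
    simpa [u, hu] using M.mul_mem_left k' hm
  exact (Ideal.eq_top_iff_one C).mpr (by simpa using C.sub_mem (hPC huP) (hMC hu1))

def colonPrime (P : PrimeSpectrum (ringR K M)) (hMP : ¬ ringRIdeal K M ≤ P.asIdeal) :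
    PrimeSpectrum T :=
  ⟨colonIdeal K M P.asIdeal, colonIdeal_isPrime P.2 hMP⟩

lemma colonIdeal_lt_colonIdeal {P P' : Ideal (ringR K M)} (hP : P.IsPrime) (hP' : P'.IsPrime)
    (hMP' : ¬ ringRIdeal K M ≤ P') (h : P < P') : colonIdeal K M P < colonIdeal K M P' := by
  have hMP : ¬ ringRIdeal K M ≤ P := fun hle => hMP' (hle.trans h.le)
  refine (colonIdeal_mono h.le).lt_of_ne fun heq => h.ne ?_
  rw [← comap_colonIdeal hP hMP, heq, comap_colonIdeal hP' hMP']

lemma height_le_height_colonPrime (P : PrimeSpectrum (ringR K M))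
    (hMP : ¬ ringRIdeal K M ≤ P.asIdeal) : height P ≤ height (colonPrime P hMP) := by
  have hMx (x : Set.Iic P) : ¬ ringRIdeal K M ≤ x.1.asIdeal := fun hle => hMP (hle.trans x.2)
  let f : Set.Iic P → Set.Iic (colonPrime P hMP) :=
    fun x => ⟨colonPrime x.1 (hMx x), colonIdeal_mono x.2⟩
  have hf : StrictMono f := fun x y hxy => colonIdeal_lt_colonIdeal x.1.2 y.1.2 (hMx y) hxy
  rw [← WithBot.coe_le_coe, height_eq_krullDim_Iic, height_eq_krullDim_Iic]
  exact krullDim_le_of_strictMono f hf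

lemma height_ringRPrime [IsDomain T] (hM : M.IsMaximal) (hLM : DirectSumDecomp L M)
    (hKL : K ≤ L) (hfrac : IsFracOf K L) :
    height (ringRPrime K M) = height (⟨M, hM.isPrime⟩ : PrimeSpectrum T) := by
  refine le_antisymm ?_
    (height_le_height_apply_of_strictMono _ (strictMono_comap_subtype_ringR hM) _)
  rw [height_eq_iSup_lt_height]
  refine iSup₂_le fun P hP => ?_
  have hMP : ¬ ringRIdeal K M ≤ P.asIdeal := not_le_of_gt hP
  have hlt : colonPrime P hMP < ⟨M, hM.isPrime⟩ := by
    refine (colonIdeal_le_of_lt_ringRIdeal hLM hKL hfrac P.2 hP).lt_of_ne fun heq => hP.ne ?_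
    ext1
    rw [← comap_colonIdeal P.2 hMP, heq]
    rfl
  calc height P + 1 ≤ height _ + 1 := by gcongr; exact height_le_height_colonPrime P hMP
    _ ≤ _ := height_add_one_le hlt

lemma height_le_ringKrullDim_of_not_le (P : PrimeSpectrum (ringR K M))
    (hMP : ¬ ringRIdeal K M ≤ P.asIdeal) : (height P : WithBot ℕ∞) ≤ ringKrullDim T :=
  (WithBot.coe_le_coe.mpr (height_le_height_colonPrime P hMP)).trans (height_le_krullDim _)

lemma height_le_height_add_coheight_of_le [M.IsPrime] (hL : IsFieldSub L) (hKL : K ≤ L)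
    {P : PrimeSpectrum (ringR K M)} (hMP : ringRPrime K M ≤ P) :
    height P ≤ height (ringRPrime K M) + coheight (ringRPrime K M) :=
  height_le_height_add_coheight_of_forall_le fun x hx =>
    le_ringRIdeal_or_ringRIdeal_le hL hKL x.2 P.2.ne_top hx hMP

lemma ringKrullDim_ringR (hL : IsFieldSub L) (hM : M.IsMaximal) (hKL : K ≤ L) :
    ringKrullDim (ringR K M) =
      max ↑(height (ringRPrime K M) + coheight (ringRPrime K M)) (ringKrullDim T) := by
  refine le_antisymm ?_ (max_le ?_ ?_)
  · rw [ringKrullDim, krullDim_eq_iSup_height]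
    refine iSup_le fun P => ?_
    by_cases hMP : ringRPrime K M ≤ P
    · exact le_max_of_le_left
        (WithBot.coe_le_coe.mpr (height_le_height_add_coheight_of_le hL hKL hMP))
    · exact le_max_of_le_right (height_le_ringKrullDim_of_not_le P hMP)
  · have : Nonempty (PrimeSpectrum (ringR K M)) := ⟨ringRPrime K M⟩
    rw [ringKrullDim, krullDim_eq_iSup_height_add_coheight_of_nonempty]
    exact WithBot.coe_le_coe.mpr (le_iSup (fun P => height P + coheight P) _)
  · exact krullDim_le_of_strictMono _ (strictMono_comap_subtype_ringR hM)

end RingR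

theorem stmt_17_general {T : Type*} [CommRing T] [IsDomain T]
    (L : Subring T) (M : Ideal T) (K : Subring T)
    (hL : IsFieldSub L) (hM : M.IsMaximal)
    (hLM : DirectSumDecomp L M) (hKL : K ≤ L)
    (hfrac : IsFracOf K L)
    (hKfin : ringKrullDim ↥K ≠ ⊤) (hTfin : ringKrullDim T ≠ ⊤) :
    ringKrullDim ↥(ringR K M) ≠ ⊤ ∧
      ringKrullDim ↥(ringR K M) =
        max (ringKrullDim (@Localization.AtPrime T _ M hM.isPrime) + ringKrullDim ↥K)
          (ringKrullDim T) := by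
  have hloc : ringKrullDim (Localization.AtPrime M) = Order.height (ringRPrime K M) := by
    rw [IsLocalization.AtPrime.ringKrullDim_eq_height M, height_ringRPrime hM hLM hKL hfrac,
      ← PrimeSpectrum.height_eq_orderHeight]
  have hK : ringKrullDim K = Order.coheight (ringRPrime K M) :=
    (coheight_ringRPrime fun x hx => hLM.2 x (hKL hx)).symm
  have hdim : ringKrullDim (ringR K M) =
      max (ringKrullDim (Localization.AtPrime M) + ringKrullDim K) (ringKrullDim T) := by
    rw [hloc, hK, ← WithBot.coe_add, ringKrullDim_ringR hL hM hKL]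
  have hh : Order.height (ringRPrime K M) ≠ ⊤ := by
    rw [height_ringRPrime hM hLM hKL hfrac]
    intro htop
    have hle := Order.height_le_krullDim (⟨M, hM.isPrime⟩ : PrimeSpectrum T)
    rw [htop] at hle
    exact hTfin (top_le_iff.mp hle)
  have hc : Order.coheight (ringRPrime K M) ≠ ⊤ := fun htop => hKfin (by rw [hK, htop]; rfl)
  refine ⟨?_, hdim⟩
  rw [ringKrullDim_ringR hL hM hKL]
  refine (max_lt ?_ (lt_top_iff_ne_top.mpr hTfin)).ne
  exact WithBot.coe_lt_coe.mpr (lt_top_iff_ne_top.mpr (WithTop.add_ne_top.mpr ⟨hh, hc⟩))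

theorem stmt_17 {T : Type*} [CommRing T] [IsDomain T]
    (L : Subring T) (M : Ideal T) (K : Subring T)
    (hL : IsFieldSub L) (hM : M.IsMaximal) (hM0 : M ≠ ⊥)
    (hLM : DirectSumDecomp L M) (hKL : K ≤ L) (hKne : K ≠ L)
    (hfrac : IsFracOf K L)
    (hKfin : ringKrullDim ↥K ≠ ⊤) (hTfin : ringKrullDim T ≠ ⊤) :
    ringKrullDim ↥(ringR K M) ≠ ⊤ ∧
      ringKrullDim ↥(ringR K M) =
        max (ringKrullDim (@Localization.AtPrime T _ M hM.isPrime) + ringKrullDim ↥K)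
          (ringKrullDim T) :=
  stmt_17_general L M K hL hM hLM hKL hfrac hKfin hTfin
end

section
/- Let K be an integral domain properly contained in a field L. The composite K + XL[X] is a GCD-domain if and only if L is the fraction field of K and K is a GCD-domain. -/
section CompositeSetup

variable {L : Type*} [Field L]

/-- The polynomial composite `K + X L[X]` as a subring of `L[X]`. -/
def composite (K : Subring L) : Subring (Polynomial L) where
  carrier := {p | p.coeff 0 ∈ K}
  one_mem' := by simpa using K.one_mem
  zero_mem' := by simpa using K.zero_mem
  add_mem' := by
    intro a b ha hb
    simpa [Polynomial.coeff_add] using K.add_mem ha hb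
  neg_mem' := by
    intro a ha
    simpa [Polynomial.coeff_neg] using K.neg_mem ha
  mul_mem' := by
    intro a b ha hb
    simpa [Polynomial.mul_coeff_zero] using K.mul_mem ha hb

/-- `L` is the fraction field of the subring `K`. -/
def FracOfField (K : Subring L) : Prop :=
  ∀ l : L, ∃ a ∈ K, ∃ b ∈ K, b ≠ 0 ∧ l * b = a

end CompositeSetup

/-!
Every nonzero `f ∈ K + X L[X]` factors in `L[X]` as `C a * X ^ m * u` with `a ≠ 0` and
`u(0) = 1`, and divisibility in the composite splits into three conditions:
`C a * X ^ i * u ∣ C b * X ^ j * w` iff `u ∣ w` in `L[X]`, `i ≤ j`, and `b / a ∈ K` when `i = j`.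
So for `m ≤ n` a gcd of `C a * X ^ m * u` and `C b * X ^ n * w` is `C d * X ^ m * gcd u w`,
where `d = a` if `m < n`, and `d` is a gcd of `a` and `b` relative to `K` if `m = n`; such a
relative gcd exists when `L = Frac K` and `K` is a GCD domain.

Conversely, the constants show that `K` is a GCD domain. A gcd of `X ^ 2` and `C l * X ^ 2` is
divisible by every `C c * X`; if it were `C e * X` this would force `e / c ∈ K` for all `c ≠ 0`,
i.e. `K = L`, so it is `C e * X ^ 2` with `1 / e, l / e ∈ K`, which writes `l` as a fraction.
-/

open Polynomial

theorem IsGCDDomain.nonempty_gcdMonoid {A : Type*} [CommRing A] [IsDomain A]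
    (h : IsGCDDomain A) : Nonempty (GCDMonoid A) := by
  classical
  choose g hga hgb hg using h
  refine ⟨gcdMonoidOfGCD
    (fun a b => if ha : a = 0 then b else if hb : b = 0 then a else g a b ha hb) ?_ ?_ ?_⟩
  · intro a b
    split_ifs with ha hb
    · simp [ha]
    · exact dvd_rfl
    · exact hga a b ha hb
  · intro a b
    split_ifs with ha hb
    · exact dvd_rfl
    · simp [hb]
    · exact hgb a b ha hb
  · intro a b c hac hab
    split_ifs with hc hb
    · exact hab
    · exact hac
    · exact hg c b hc hb a hac hab

section

variable {L : Type*} [Field L] {K : Subring L}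

theorem Subring.dvd_iff_div_mem {x y : K} (hx : x ≠ 0) : x ∣ y ↔ (y : L) / x ∈ K := by
  have hx' : (x : L) ≠ 0 := by exact_mod_cast hx
  constructor
  · rintro ⟨c, rfl⟩
    simp [hx']
  · intro h
    exact ⟨⟨_, h⟩, Subtype.ext (by simp [mul_div_cancel₀ _ hx'])⟩

theorem FracOfField.exists_gcd_div_mem [GCDMonoid K] (hF : FracOfField K) {a : L} (ha : a ≠ 0)
    (b : L) :
    ∃ d : L, d ≠ 0 ∧ a / d ∈ K ∧ b / d ∈ K ∧
      ∀ e : L, e ≠ 0 → a / e ∈ K → b / e ∈ K → d / e ∈ K := by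
  obtain ⟨p, hp, q, hq, hq0, hpq⟩ := hF (b / a)
  have hbq : b * q = a * p := by rw [← hpq]; field_simp
  set P : K := ⟨p, hp⟩
  set Q : K := ⟨q, hq⟩
  set c := gcd P Q
  have hc : (c : L) ≠ 0 := by
    have hQ : Q ≠ 0 := fun h => hq0 (congrArg Subtype.val h)
    exact_mod_cast fun h => hQ ((gcd_eq_zero_iff P Q).1 h).2
  obtain ⟨p', hp'⟩ := gcd_dvd_left P Q
  obtain ⟨q', hq'⟩ := gcd_dvd_right P Q
  replace hp' : p = c * p' := congrArg Subtype.val hp'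
  replace hq' : q = c * q' := congrArg Subtype.val hq'
  refine ⟨a * c / q, div_ne_zero (mul_ne_zero ha hc) hq0, ?_, ?_, ?_⟩
  · convert q'.2 using 1
    rw [hq']
    field_simp
  · convert p'.2 using 1
    field_simp
    linear_combination hbq + a * hp'
  · intro e he hae hbe
    -- `q ∣ (a/e) p` and `q ∣ (a/e) q`, hence `q ∣ gcd((a/e) p, (a/e) q) ~ (a/e) gcd(p, q)`.
    set s : K := ⟨a / e, hae⟩
    have hsP : Q ∣ s * P := ⟨⟨b / e, hbe⟩, Subtype.ext (by
      simp only [s, P, Q, Subring.coe_mul]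
      field_simp
      linear_combination -hbq)⟩
    obtain ⟨r, hr⟩ := (dvd_gcd hsP (dvd_mul_left Q s)).trans (gcd_mul_left' s P Q).dvd
    replace hr : a / e * c = q * r := congrArg Subtype.val hr
    convert r.2 using 1
    field_simp
    field_simp at hr
    linear_combination hr

theorem exists_gcd_coeff_zero_eq_one {u : L[X]} (hu : u.coeff 0 ≠ 0) (w : L[X]) :
    ∃ h : L[X], h.coeff 0 = 1 ∧ h ∣ u ∧ h ∣ w ∧ ∀ z, z ∣ u → z ∣ w → z ∣ h := by
  classical
  set c := (gcd u w).coeff 0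
  have hc : c ≠ 0 := by
    obtain ⟨r, hr⟩ := gcd_dvd_left u w
    intro h
    exact hu (by rw [hr, mul_coeff_zero, show (gcd u w).coeff 0 = 0 from h, zero_mul])
  have hassoc : Associated (C c⁻¹ * gcd u w) (gcd u w) :=
    associated_unit_mul_left _ _ (isUnit_C.2 (inv_ne_zero hc).isUnit)
  refine ⟨C c⁻¹ * gcd u w, by rw [coeff_C_mul, inv_mul_cancel₀ hc],
    hassoc.dvd.trans (gcd_dvd_left u w), hassoc.dvd.trans (gcd_dvd_right u w),
    fun z hzu hzw => (dvd_gcd hzu hzw).trans hassoc.symm.dvd⟩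

theorem exists_eq_C_mul_X_pow_mul {p : L[X]} (hp : p ≠ 0) :
    ∃ (a : L) (i : ℕ) (u : L[X]), a ≠ 0 ∧ u.coeff 0 = 1 ∧ p = C a * X ^ i * u := by
  obtain ⟨q, hq⟩ : X ^ p.natTrailingDegree ∣ p :=
    X_pow_dvd_iff.2 fun d hd => coeff_eq_zero_of_lt_natTrailingDegree hd
  have hq0 : q.coeff 0 ≠ 0 := by
    have h : p.trailingCoeff ≠ 0 := trailingCoeff_nonzero_iff_nonzero.2 hp
    rw [trailingCoeff] at h
    nth_rewrite 1 [hq] at h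
    rwa [coeff_X_pow_mul', if_pos le_rfl, Nat.sub_self] at h
  refine ⟨q.coeff 0, p.natTrailingDegree, C (q.coeff 0)⁻¹ * q, hq0,
    by rw [coeff_C_mul, inv_mul_cancel₀ hq0], ?_⟩
  calc p = C (q.coeff 0 * (q.coeff 0)⁻¹) * X ^ p.natTrailingDegree * q := by
        rw [mul_inv_cancel₀ hq0, C_1, one_mul, ← hq]
    _ = _ := by rw [C_mul]; ring

theorem natTrailingDegree_C_mul_X_pow_mul {a : L} (ha : a ≠ 0) (i : ℕ) {u : L[X]}
    (hu : u.coeff 0 ≠ 0) : (C a * X ^ i * u).natTrailingDegree = i := by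
  have hu0 : u ≠ 0 := fun h => hu (by simp [h])
  rw [natTrailingDegree_mul (by simp [ha]) hu0, C_mul_X_pow_eq_monomial,
    natTrailingDegree_monomial ha, natTrailingDegree_eq_zero.2 (Or.inr hu), add_zero]

theorem coeff_C_mul_X_pow_mul_self (a : L) (i : ℕ) (u : L[X]) :
    (C a * X ^ i * u).coeff i = a * u.coeff 0 := by
  rw [mul_assoc, coeff_C_mul, coeff_X_pow_mul', if_pos le_rfl, Nat.sub_self]

@[simp]
theorem mem_composite {p : L[X]} : p ∈ composite K ↔ p.coeff 0 ∈ K := Iff.rfl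

theorem C_mul_X_pow_mul_mem_composite_iff {a : L} {i : ℕ} {u : L[X]} (hu : u.coeff 0 = 1) :
    C a * X ^ i * u ∈ composite K ↔ (i = 0 → a ∈ K) := by
  rw [mem_composite]
  rcases eq_or_ne i 0 with rfl | hi
  · simp [hu]
  · simp [mul_assoc, hi, hi.symm, K.zero_mem]

theorem exists_coe_eq_C_mul_X_pow_mul {x : composite K} (hx : x ≠ 0) :
    ∃ (a : L) (i : ℕ) (u : L[X]), a ≠ 0 ∧ u.coeff 0 = 1 ∧ (x : L[X]) = C a * X ^ i * u :=
  exists_eq_C_mul_X_pow_mul (by exact_mod_cast hx)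

theorem composite_dvd_iff {x y : composite K} {a b : L} {i j : ℕ} {u w : L[X]}
    (ha : a ≠ 0) (hb : b ≠ 0) (hu : u.coeff 0 = 1) (hw : w.coeff 0 = 1)
    (hx : (x : L[X]) = C a * X ^ i * u) (hy : (y : L[X]) = C b * X ^ j * w) :
    x ∣ y ↔ u ∣ w ∧ i ≤ j ∧ (i = j → b / a ∈ K) := by
  constructor
  · rintro ⟨q, hq⟩
    replace hq : C b * X ^ j * w = C a * X ^ i * u * (q : L[X]) := by
      rw [← hx, ← hy, hq, Subring.coe_mul]
    have hu0 : u ≠ 0 := fun h => by simp [h] at hu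
    have hw0 : w ≠ 0 := fun h => by simp [h] at hw
    have hq0 : (q : L[X]) ≠ 0 := by
      rintro h
      rw [h, mul_zero] at hq
      simp [hb, hw0] at hq
    have hij : i ≤ j := by
      have := congrArg natTrailingDegree hq
      rw [natTrailingDegree_mul (by simp [ha, hu0]) hq0,
        natTrailingDegree_C_mul_X_pow_mul hb j (by simp [hw]),
        natTrailingDegree_C_mul_X_pow_mul ha i (by simp [hu])] at this
      omega
    refine ⟨?_, hij, ?_⟩
    · have hcop : IsCoprime u (X ^ j) :=
        ((irreducible_X.coprime_iff_not_dvd).2 (by simp [X_dvd_iff, hu])).symm.pow_right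
      have hdvd : u ∣ X ^ j * (C b * w) := ⟨C a * X ^ i * (q : L[X]), by linear_combination hq⟩
      exact (isUnit_C.2 hb.isUnit).dvd_mul_left.1 (hcop.dvd_of_dvd_mul_left hdvd)
    · rintro rfl
      have hcoeff := congrArg (coeff · i) hq
      simp only [mul_assoc (C a * X ^ i), coeff_C_mul_X_pow_mul_self, mul_coeff_zero, hu, hw,
        one_mul, mul_one] at hcoeff
      rw [hcoeff, mul_div_cancel_left₀ _ ha]
      exact q.2
  · rintro ⟨⟨r, rfl⟩, hij, hK⟩
    have hr : r.coeff 0 = 1 := by rwa [mul_coeff_zero, hu, one_mul] at hw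
    refine ⟨⟨C (b / a) * X ^ (j - i) * r,
      (C_mul_X_pow_mul_mem_composite_iff hr).2 fun h => hK (by omega)⟩, Subtype.ext ?_⟩
    rw [Subring.coe_mul, hx, hy]
    calc C b * X ^ j * (u * r) = C (a * (b / a)) * X ^ (i + (j - i)) * (u * r) := by
          rw [mul_div_cancel₀ _ ha, Nat.add_sub_cancel' hij]
      _ = _ := by rw [C_mul, pow_add]; ring

theorem exists_composite_gcd_of_le [GCDMonoid K] (hF : FracOfField K) {f g : composite K}
    (hf0 : f ≠ 0) {a b : L} {m n : ℕ} {u w : L[X]} (ha : a ≠ 0) (hb : b ≠ 0)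
    (hu : u.coeff 0 = 1) (hw : w.coeff 0 = 1)
    (hf : (f : L[X]) = C a * X ^ m * u) (hg : (g : L[X]) = C b * X ^ n * w) (hmn : m ≤ n) :
    ∃ d, d ∣ f ∧ d ∣ g ∧ ∀ c, c ∣ f → c ∣ g → c ∣ d := by
  obtain ⟨h, hh, hhu, hhw, hh_gcd⟩ := exists_gcd_coeff_zero_eq_one (hu ▸ one_ne_zero) w
  obtain ⟨d, hd, hda, hdb, hd_gcd⟩ : ∃ d : L, d ≠ 0 ∧ a / d ∈ K ∧ (m = n → b / d ∈ K) ∧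
      ∀ e : L, e ≠ 0 → a / e ∈ K → (m = n → b / e ∈ K) → d / e ∈ K := by
    rcases eq_or_ne m n with rfl | hne
    · obtain ⟨d, hd, hda, hdb, hd_gcd⟩ := hF.exists_gcd_div_mem ha b
      exact ⟨d, hd, hda, fun _ => hdb, fun e he hae hbe => hd_gcd e he hae (hbe rfl)⟩
    · exact ⟨a, ha, by simp [ha, K.one_mem], hne.elim, fun e _ hae _ => hae⟩
  have hfK := (C_mul_X_pow_mul_mem_composite_iff hu).1 (hf ▸ f.2)
  have hgK := (C_mul_X_pow_mul_mem_composite_iff hw).1 (hg ▸ g.2)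
  have hdK : m = 0 → d ∈ K := fun hm => by
    simpa using hd_gcd 1 one_ne_zero (by simpa using hfK hm) fun hmn => by
      simpa using hgK (hmn ▸ hm)
  refine ⟨⟨C d * X ^ m * h, (C_mul_X_pow_mul_mem_composite_iff hh).2 hdK⟩,
    (composite_dvd_iff hd ha hh hu rfl hf).2 ⟨hhu, le_rfl, fun _ => hda⟩,
    (composite_dvd_iff hd hb hh hw rfl hg).2 ⟨hhw, hmn, hdb⟩, fun c hcf hcg => ?_⟩
  obtain ⟨e, k, z, he, hz, hc⟩ := exists_coe_eq_C_mul_X_pow_mul (ne_zero_of_dvd_ne_zero hf0 hcf)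
  obtain ⟨hzu, hkm, hea⟩ := (composite_dvd_iff he ha hz hu hc hf).1 hcf
  obtain ⟨hzw, -, heb⟩ := (composite_dvd_iff he hb hz hw hc hg).1 hcg
  exact (composite_dvd_iff he hd hz hh hc rfl).2 ⟨hh_gcd z hzu hzw, hkm,
    fun hkm' => hd_gcd e he (hea hkm') fun hmn' => heb (hkm'.trans hmn')⟩

theorem isGCDDomain_composite (hF : FracOfField K) (hG : IsGCDDomain K) :
    IsGCDDomain (composite K) := by
  obtain ⟨_⟩ := hG.nonempty_gcdMonoid
  intro f g hf hg
  obtain ⟨a, m, u, ha, hu, hfu⟩ := exists_coe_eq_C_mul_X_pow_mul hf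
  obtain ⟨b, n, w, hb, hw, hgw⟩ := exists_coe_eq_C_mul_X_pow_mul hg
  rcases le_total m n with hmn | hnm
  · exact exists_composite_gcd_of_le hF hf ha hb hu hw hfu hgw hmn
  · obtain ⟨d, hdg, hdf, hd⟩ := exists_composite_gcd_of_le hF hg hb ha hw hu hgw hfu hnm
    exact ⟨d, hdf, hdg, fun c hcf hcg => hd c hcg hcf⟩

theorem isGCDDomain_of_isGCDDomain_composite (h : IsGCDDomain (composite K)) : IsGCDDomain K := by
  let ι (c : K) : composite K :=
    ⟨C (c : L) * X ^ 0 * 1, (C_mul_X_pow_mul_mem_composite_iff coeff_one_zero).2 fun _ => c.2⟩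
  have hι0 {c : K} (hc : c ≠ 0) : ι c ≠ 0 := fun h => hc (by
    simpa [ι] using congrArg (fun p : composite K => (p : L[X]).coeff 0) h)
  intro a b ha hb
  have ha' : (a : L) ≠ 0 := by exact_mod_cast ha
  have hb' : (b : L) ≠ 0 := by exact_mod_cast hb
  obtain ⟨g, hga, hgb, hg⟩ := h (ι a) (ι b) (hι0 ha) (hι0 hb)
  obtain ⟨e, k, z, he, hz, hge⟩ :=
    exists_coe_eq_C_mul_X_pow_mul (ne_zero_of_dvd_ne_zero (hι0 ha) hga)
  obtain ⟨-, hk, hea⟩ := (composite_dvd_iff he ha' hz coeff_one_zero hge rfl).1 hga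
  obtain ⟨-, -, heb⟩ := (composite_dvd_iff he hb' hz coeff_one_zero hge rfl).1 hgb
  obtain rfl : k = 0 := by omega
  have heK : e ∈ K := (C_mul_X_pow_mul_mem_composite_iff hz).1 (hge ▸ g.2) rfl
  have he0 : (⟨e, heK⟩ : K) ≠ 0 := fun h => he (congrArg Subtype.val h)
  refine ⟨⟨e, heK⟩, (Subring.dvd_iff_div_mem he0).2 (hea rfl),
    (Subring.dvd_iff_div_mem he0).2 (heb rfl), fun c hca hcb => ?_⟩
  have hc : c ≠ 0 := ne_zero_of_dvd_ne_zero ha hca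
  have hc' : (c : L) ≠ 0 := by exact_mod_cast hc
  have hιc : ι c ∣ g := hg _
    ((composite_dvd_iff hc' ha' coeff_one_zero coeff_one_zero rfl rfl).2
      ⟨dvd_rfl, le_rfl, fun _ => (Subring.dvd_iff_div_mem hc).1 hca⟩)
    ((composite_dvd_iff hc' hb' coeff_one_zero coeff_one_zero rfl rfl).2
      ⟨dvd_rfl, le_rfl, fun _ => (Subring.dvd_iff_div_mem hc).1 hcb⟩)
  exact (Subring.dvd_iff_div_mem hc).2
    (((composite_dvd_iff hc' he coeff_one_zero hz rfl hge).1 hιc).2.2 rfl)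

theorem fracOfField_of_isGCDDomain_composite (hK : K ≠ ⊤) (h : IsGCDDomain (composite K)) :
    FracOfField K := by
  intro l
  rcases eq_or_ne l 0 with rfl | hl
  · exact ⟨0, K.zero_mem, 1, K.one_mem, one_ne_zero, by simp⟩
  let μ (c : L) (i : ℕ) (hi : i ≠ 0) : composite K :=
    ⟨C c * X ^ i * 1, (C_mul_X_pow_mul_mem_composite_iff coeff_one_zero).2 (absurd · hi)⟩
  have hμ0 {c : L} {i : ℕ} (hi : i ≠ 0) (hc : c ≠ 0) : μ c i hi ≠ 0 := by
    simpa [μ, Subtype.ext_iff] using hc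
  obtain ⟨g, hgx, hgy, hg⟩ := h (μ 1 2 two_ne_zero) (μ l 2 two_ne_zero)
    (hμ0 two_ne_zero one_ne_zero) (hμ0 two_ne_zero hl)
  obtain ⟨e, k, z, he, hz, hge⟩ :=
    exists_coe_eq_C_mul_X_pow_mul (ne_zero_of_dvd_ne_zero (hμ0 two_ne_zero one_ne_zero) hgx)
  obtain ⟨-, hk2, he1⟩ := (composite_dvd_iff he one_ne_zero hz coeff_one_zero hge rfl).1 hgx
  obtain ⟨-, -, hel⟩ := (composite_dvd_iff he hl hz coeff_one_zero hge rfl).1 hgy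
  -- `C c * X` is a common divisor of `X ^ 2` and `C l * X ^ 2` for every `c ≠ 0`.
  have hX (c : L) (hc : c ≠ 0) : 1 ≤ k ∧ (1 = k → e / c ∈ K) :=
    ((composite_dvd_iff hc he coeff_one_zero hz rfl hge).1 (hg (μ c 1 one_ne_zero)
      ((composite_dvd_iff hc one_ne_zero coeff_one_zero coeff_one_zero rfl rfl).2
        ⟨dvd_rfl, by omega, by omega⟩)
      ((composite_dvd_iff hc hl coeff_one_zero coeff_one_zero rfl rfl).2
        ⟨dvd_rfl, by omega, by omega⟩))).2
  obtain rfl | rfl : k = 1 ∨ k = 2 := by have := (hX 1 one_ne_zero).1; omega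
  · refine absurd (eq_top_iff.2 fun y _ => ?_) hK
    rcases eq_or_ne y 0 with rfl | hy
    · exact K.zero_mem
    · simpa [div_div_cancel₀ he] using (hX (e / y) (div_ne_zero he hy)).2 rfl
  · exact ⟨l / e, hel rfl, 1 / e, he1 rfl, one_div_ne_zero he, by field_simp⟩

end

theorem stmt_19 {L : Type*} [Field L] (K : Subring L) (hKne : K ≠ ⊤) :
    IsGCDDomain ↥(composite K) ↔ (FracOfField K ∧ IsGCDDomain ↥K) :=
  ⟨fun h => ⟨fracOfField_of_isGCDDomain_composite hKne h, isGCDDomain_of_isGCDDomain_composite h⟩,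
    fun ⟨hF, hG⟩ => isGCDDomain_composite hF hG⟩
end
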